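/- arXiv:0907.0079 — 4 statements merged into one kernel-verified Lean document; each statement's English description precedes it below -/
import Mathlib

section
/- Let P₀ be a probability measure on ℝ^k with P₀(H) < γ for every affine hyperplane H ⊂ ℝ^k, and let (P_n) be a sequence of probability measures on ℝ^k converging weakly to P₀. Then there exist ε > 0 and n₀ ≥ 1 such that for n = 0 and all n ≥ n₀, for every a ∈ ℝ^k with ‖a‖ = 1, every μ ∈ ℝ^k, and every r > 0 with P_n(H(a,μ,r)) ≥ γ − ε, one has ∫_{H(a,μ,r)} (aᵀ(x−μ))² P_n(dx) ≥ ε. -/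
open MeasureTheory Filter Topology
open scoped ENNReal Classical

noncomputable section

abbrev Vec (k : ℕ) := EuclideanSpace ℝ (Fin k)

def memK {k : ℕ} (P : Measure (Vec k)) (γ : ℝ) (φ : Vec k → ℝ) : Prop :=
  Measurable φ ∧ (∀ x, 0 ≤ φ x ∧ φ x ≤ 1) ∧ γ ≤ ∫ x, φ x ∂P ∧
    Integrable (fun x => ‖x‖ ^ 2 * φ x) P

def trimMean {k : ℕ} (P : Measure (Vec k)) (φ : Vec k → ℝ) : Vec k :=
  (∫ x, φ x ∂P)⁻¹ • ∫ x, φ x • x ∂P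

def trimCov {k : ℕ} (P : Measure (Vec k)) (φ : Vec k → ℝ) : Matrix (Fin k) (Fin k) ℝ :=
  Matrix.of fun i j =>
    (∫ x, φ x ∂P)⁻¹ * ∫ x, φ x * ((x i - trimMean P φ i) * (x j - trimMean P φ j)) ∂P

def ellipsoid {k : ℕ} (μ : Vec k) (S : Matrix (Fin k) (Fin k) ℝ) (ρ : ℝ) : Set (Vec k) :=
  {x | ∑ i, ∑ j, (x i - μ i) * S⁻¹ i j * (x j - μ j) ≤ ρ ^ 2}

def trimRadius {k : ℕ} (P : Measure (Vec k)) (γ : ℝ) (φ : Vec k → ℝ) : ℝ :=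
  sInf {s : ℝ | 0 < s ∧ γ ≤ (P (ellipsoid (trimMean P φ) (trimCov P φ) s)).toReal}

def Minimizing {k : ℕ} (P : Measure (Vec k)) (γ : ℝ) (φ : Vec k → ℝ) : Prop :=
  memK P γ φ ∧ ∀ ψ, memK P γ ψ → (trimCov P φ).det ≤ (trimCov P ψ).det

def IsMCD {k : ℕ} (P : Measure (Vec k)) (γ : ℝ) (T : Vec k)
    (C : Matrix (Fin k) (Fin k) ℝ) : Prop :=
  ∃ φ, Minimizing P γ φ ∧ T = trimMean P φ ∧ C = trimCov P φ

def HypSmall {k : ℕ} (P : Measure (Vec k)) (γ : ℝ) : Prop :=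
  ∀ (a : Vec k) (c : ℝ), a ≠ 0 → (P {x | (inner ℝ a x : ℝ) = c}).toReal < γ

def WeakLim {k : ℕ} (P : ℕ → Measure (Vec k)) (P₀ : Measure (Vec k)) : Prop :=
  ∀ f : BoundedContinuousFunction (Vec k) ℝ,
    Tendsto (fun n => ∫ x, f x ∂(P n)) atTop (𝓝 (∫ x, f x ∂P₀))

/-- The slab (cylinder) `H(a, μ, r) = {x : (aᵀ(x-μ))² ≤ r²}`. -/
def slab {k : ℕ} (a μ : Vec k) (r : ℝ) : Set (Vec k) :=
  {x | (inner ℝ a (x - μ) : ℝ) ^ 2 ≤ r ^ 2}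

/-!
By Markov's inequality for `⟪a, x - μ⟫²` on the slab, a slab of mass close to `γ` but with small
second moment puts almost all of its mass into the thickened hyperplane `|⟪a, x - μ⟫| ≤ δ`.
It therefore suffices to bound the mass of thickened hyperplanes of a fixed width `δ` by `γ - β`,
uniformly in the unit normal, the offset, and the measures `P₀` and `P n` for large `n`.
Near a given normal and offset `(a, c)` such a hyperplane lies in the closed set
`{|⟪a, x⟫ - c| ≤ d} ∪ (ball 0 ρ)ᶜ`, whose `P₀`-mass is `< γ` for small `d` and large `ρ` because
`P₀ {⟪a, x⟫ = c} < γ`; the portmanteau theorem carries this bound over to `P n` for large `n`.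
Compactness of the unit sphere times a bounded interval of offsets makes the bound uniform,
and large offsets are handled by the tail of `P₀` outside a ball.
-/

open Metric Set
open scoped RealInnerProductSpace

lemma tendsto_measureReal_compl_ball {X : Type*} [PseudoMetricSpace X] [MeasurableSpace X]
    [OpensMeasurableSpace X] (μ : Measure X) [IsFiniteMeasure μ] (x : X) :
    Tendsto (fun ρ => μ.real (ball x ρ)ᶜ) atTop (𝓝 0) := by
  have hempty : ⋂ ρ : ℝ, (ball x ρ)ᶜ = ∅ := by
    rw [← compl_iUnion, compl_empty_iff]
    exact eq_univ_of_forall fun y => mem_iUnion.2 ⟨dist y x + 1, by simp [mem_ball]⟩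
  have h := tendsto_measure_iInter_atTop (μ := μ) (s := fun ρ : ℝ => (ball x ρ)ᶜ)
    (fun ρ => isOpen_ball.isClosed_compl.measurableSet.nullMeasurableSet)
    (fun _ _ hρ => compl_subset_compl.mpr (ball_subset_ball hρ)) ⟨0, measure_ne_top _ _⟩
  rw [hempty, measure_empty] at h
  exact (ENNReal.tendsto_toReal ENNReal.zero_ne_top).comp h

section ThickHyperplane

variable {E : Type*} [NormedAddCommGroup E] [InnerProductSpace ℝ E]

def thickHyperplane (a : E) (c d : ℝ) : Set E :=
  {x | |⟪a, x⟫ - c| ≤ d}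

lemma isClosed_thickHyperplane (a : E) (c d : ℝ) : IsClosed (thickHyperplane a c d) :=
  isClosed_le (by fun_prop) continuous_const

lemma thickHyperplane_mono (a : E) (c : ℝ) : Monotone (thickHyperplane a c) :=
  fun _ _ hdd' _ hx => le_trans hx hdd'

lemma biInter_thickHyperplane (a : E) (c : ℝ) :
    ⋂ d > 0, thickHyperplane a c d = {x | ⟪a, x⟫ = c} := by
  ext x
  simp only [thickHyperplane, mem_iInter, mem_ofPred_eq]
  refine ⟨fun h => ?_, fun h d hd => by simp [h, hd.le]⟩
  exact sub_eq_zero.mp (abs_nonpos_iff.mp (le_of_forall_gt_imp_ge_of_dense h))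

lemma thickHyperplane_subset_union_compl_ball {a b : E} {c e δ d ρ : ℝ}
    (h : ‖a - b‖ * ρ + |c - e| + δ ≤ d) :
    thickHyperplane a c δ ⊆ thickHyperplane b e d ∪ (ball 0 ρ)ᶜ := by
  intro x hx
  by_cases hxρ : x ∈ ball (0 : E) ρ
  · left
    have hba : |⟪b - a, x⟫| ≤ ‖a - b‖ * ρ := calc
      |⟪b - a, x⟫| ≤ ‖b - a‖ * ‖x‖ := abs_real_inner_le_norm _ _
      _ ≤ ‖a - b‖ * ρ := by rw [norm_sub_rev]; gcongr; exact mem_ball_zero_iff.mp hxρ |>.le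
    rw [inner_sub_left] at hba
    show |⟪b, x⟫ - e| ≤ d
    calc |⟪b, x⟫ - e| = |(⟪b, x⟫ - ⟪a, x⟫) + (⟪a, x⟫ - c) + (c - e)| := by ring_nf
      _ ≤ |⟪b, x⟫ - ⟪a, x⟫| + |⟪a, x⟫ - c| + |c - e| :=
        (abs_add_le _ _).trans (by gcongr; exact abs_add_le _ _)
      _ ≤ d := by linarith [show |⟪a, x⟫ - c| ≤ δ from hx]
  · exact Or.inr hxρ

lemma thickHyperplane_subset_compl_ball {a : E} (ha : ‖a‖ ≤ 1) {c δ R : ℝ} (h : R + δ < |c|) :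
    thickHyperplane a c δ ⊆ (ball 0 R)ᶜ := by
  intro x hx hxR
  have hax : |⟪a, x⟫| < R := calc
    |⟪a, x⟫| ≤ ‖a‖ * ‖x‖ := abs_real_inner_le_norm _ _
    _ ≤ ‖x‖ := mul_le_of_le_one_left (norm_nonneg _) ha
    _ < R := mem_ball_zero_iff.mp hxR
  have := abs_sub_abs_le_abs_sub c ⟪a, x⟫
  rw [abs_sub_comm] at this
  exact (show |⟪a, x⟫ - c| ≤ δ from hx).not_gt (by linarith)

variable [MeasurableSpace E] [OpensMeasurableSpace E] (μ : Measure E) [IsFiniteMeasure μ]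

lemma tendsto_measureReal_thickHyperplane (a : E) (c : ℝ) :
    Tendsto (fun d => μ.real (thickHyperplane a c d)) (𝓝[>] 0)
      (𝓝 (μ.real {x | ⟪a, x⟫ = c})) := by
  rw [← biInter_thickHyperplane]
  exact (ENNReal.tendsto_toReal (measure_ne_top _ _)).comp <| tendsto_measure_biInter_gt
    (fun d _ => (isClosed_thickHyperplane a c d).measurableSet.nullMeasurableSet)
    (fun _ _ _ hdd' => thickHyperplane_mono a c hdd') ⟨1, one_pos, measure_ne_top _ _⟩

lemma exists_measureReal_thickHyperplane_union_compl_ball_lt {a : E} {c γ : ℝ}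
    (h : μ.real {x | ⟪a, x⟫ = c} < γ) :
    ∃ d > 0, ∃ ρ, μ.real (thickHyperplane a c d ∪ (ball 0 ρ)ᶜ) < γ := by
  have hη : 0 < (γ - μ.real {x | ⟪a, x⟫ = c}) / 2 := by linarith
  obtain ⟨d, hd, hd0⟩ := (((tendsto_measureReal_thickHyperplane μ a c).eventually
    (gt_mem_nhds (lt_add_of_pos_right _ hη))).and self_mem_nhdsWithin).exists
  obtain ⟨ρ, hρ⟩ := ((tendsto_measureReal_compl_ball μ 0).eventually (gt_mem_nhds hη)).exists
  exact ⟨d, hd0, ρ, (measureReal_union_le _ _).trans_lt (by linarith)⟩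

end ThickHyperplane

section ThickHyperplanesSmallOn

variable {k : ℕ} {P₀ : Measure (Vec k)} {P : ℕ → Measure (Vec k)} {γ : ℝ}

variable (P₀ P γ) in
def ThickHyperplanesSmallOn (s : Set (Vec k × ℝ)) : Prop :=
  ∃ δ > 0, ∃ β > 0, ∀ᶠ n in atTop, ∀ p ∈ s,
    P₀.real (thickHyperplane p.1 p.2 δ) ≤ γ - β ∧ (P n).real (thickHyperplane p.1 p.2 δ) ≤ γ - β

lemma ThickHyperplanesSmallOn.mono {s t : Set (Vec k × ℝ)}
    (ht : ThickHyperplanesSmallOn P₀ P γ t) (hst : s ⊆ t) : ThickHyperplanesSmallOn P₀ P γ s := by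
  obtain ⟨δ, hδ, β, hβ, hev⟩ := ht
  exact ⟨δ, hδ, β, hβ, hev.mono fun n hn p hp => hn p (hst hp)⟩

lemma ThickHyperplanesSmallOn.union [IsFiniteMeasure P₀] [∀ n, IsFiniteMeasure (P n)]
    {s t : Set (Vec k × ℝ)} (hs : ThickHyperplanesSmallOn P₀ P γ s)
    (ht : ThickHyperplanesSmallOn P₀ P γ t) : ThickHyperplanesSmallOn P₀ P γ (s ∪ t) := by
  obtain ⟨δ, hδ, β, hβ, hevs⟩ := hs
  obtain ⟨δ', hδ', β', hβ', hevt⟩ := ht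
  refine ⟨min δ δ', lt_min hδ hδ', min β β', lt_min hβ hβ', ?_⟩
  filter_upwards [hevs, hevt] with n hns hnt
  have shrink {Q : Measure (Vec k)} [IsFiniteMeasure Q] {p : Vec k × ℝ} {δ₀ β₀ : ℝ}
      (hδ₀ : min δ δ' ≤ δ₀) (hβ₀ : min β β' ≤ β₀)
      (h : Q.real (thickHyperplane p.1 p.2 δ₀) ≤ γ - β₀) :
      Q.real (thickHyperplane p.1 p.2 (min δ δ')) ≤ γ - min β β' :=
    (measureReal_mono (thickHyperplane_mono _ _ hδ₀)).trans (by linarith)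
  rintro p (hp | hp)
  · exact ⟨shrink (min_le_left _ _) (min_le_left _ _) (hns p hp).1,
      shrink (min_le_left _ _) (min_le_left _ _) (hns p hp).2⟩
  · exact ⟨shrink (min_le_right _ _) (min_le_right _ _) (hnt p hp).1,
      shrink (min_le_right _ _) (min_le_right _ _) (hnt p hp).2⟩

variable [IsProbabilityMeasure P₀] [∀ n, IsProbabilityMeasure (P n)]

lemma WeakLim.eventually_measureReal_lt (hconv : WeakLim P P₀) {F : Set (Vec k)}
    (hF : IsClosed F) {c : ℝ} (h : P₀.real F < c) : ∀ᶠ n in atTop, (P n).real F < c := by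
  have hlimsup := ProbabilityMeasure.limsup_measure_closed_le_of_tendsto
    (μ := ⟨P₀, inferInstance⟩) (μs := fun n => ⟨P n, inferInstance⟩)
    (ProbabilityMeasure.tendsto_iff_forall_integral_tendsto.mpr hconv) hF
  have hlt : P₀ F < ENNReal.ofReal c :=
    (ENNReal.lt_ofReal_iff_toReal_lt (measure_ne_top _ _)).mpr h
  filter_upwards [eventually_lt_of_limsup_lt (hlimsup.trans_lt hlt)] with n hn
  exact (ENNReal.lt_ofReal_iff_toReal_lt (measure_ne_top _ _)).mp hn

lemma thickHyperplanesSmallOn_of_subset_isClosed (hconv : WeakLim P P₀) {F : Set (Vec k)}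
    (hF : IsClosed F) (hlt : P₀.real F < γ) {s : Set (Vec k × ℝ)} {δ : ℝ} (hδ : 0 < δ)
    (hsF : ∀ p ∈ s, thickHyperplane p.1 p.2 δ ⊆ F) : ThickHyperplanesSmallOn P₀ P γ s := by
  obtain ⟨β, hβ, hβF⟩ : ∃ β > 0, P₀.real F < γ - β :=
    ⟨(γ - P₀.real F) / 2, by linarith, by linarith⟩
  refine ⟨δ, hδ, β, hβ, ?_⟩
  filter_upwards [hconv.eventually_measureReal_lt hF hβF] with n hn p hp
  exact ⟨(measureReal_mono (hsF p hp)).trans hβF.le,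
    (measureReal_mono (hsF p hp)).trans hn.le⟩

lemma thickHyperplanesSmallOn_of_isCompact (hconv : WeakLim P P₀) {K : Set (Vec k × ℝ)}
    (hK : IsCompact K) (hsmall : ∀ p ∈ K, P₀.real {x | ⟪p.1, x⟫ = p.2} < γ) :
    ThickHyperplanesSmallOn P₀ P γ K := by
  refine hK.induction_on ⟨1, one_pos, 1, one_pos, .of_forall fun _ _ hp => hp.elim⟩
    (fun _ _ hst ht => ht.mono hst) (fun _ _ hs ht => hs.union ht) fun p hp => ?_
  obtain ⟨d, hd, ρ, hρ⟩ := exists_measureReal_thickHyperplane_union_compl_ball_lt P₀ (hsmall p hp)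
  set near := {q : Vec k × ℝ | ‖q.1 - p.1‖ * ρ + |q.2 - p.2| < d / 2}
  have hnear : near ∈ 𝓝 p :=
    (isOpen_lt (by fun_prop) continuous_const).mem_nhds (by simpa [near] using half_pos hd)
  have hsub : ∀ q ∈ near,
      thickHyperplane q.1 q.2 (d / 2) ⊆ thickHyperplane p.1 p.2 d ∪ (ball 0 ρ)ᶜ :=
    fun q (hq : _ < d / 2) => thickHyperplane_subset_union_compl_ball (by linarith)
  exact ⟨near, mem_nhdsWithin_of_mem_nhds hnear, thickHyperplanesSmallOn_of_subset_isClosed hconv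
    ((isClosed_thickHyperplane _ _ _).union isOpen_ball.isClosed_compl) hρ (half_pos hd) hsub⟩

theorem thickHyperplanesSmallOn_unit_sphere (hγ : 0 < γ) (hP₀ : HypSmall P₀ γ)
    (hconv : WeakLim P P₀) : ThickHyperplanesSmallOn P₀ P γ {p | ‖p.1‖ = 1} := by
  obtain ⟨R, hR⟩ := ((tendsto_measureReal_compl_ball P₀ 0).eventually (gt_mem_nhds hγ)).exists
  have hfar : ThickHyperplanesSmallOn P₀ P γ {p | ‖p.1‖ ≤ 1 ∧ R + 1 < |p.2|} :=
    thickHyperplanesSmallOn_of_subset_isClosed hconv isOpen_ball.isClosed_compl hR one_pos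
      fun p hp => thickHyperplane_subset_compl_ball hp.1 hp.2
  have hnear : ThickHyperplanesSmallOn P₀ P γ (sphere 0 1 ×ˢ Icc (-(R + 1)) (R + 1)) :=
    thickHyperplanesSmallOn_of_isCompact hconv ((isCompact_sphere 0 1).prod isCompact_Icc)
      fun p hp => hP₀ p.1 p.2 (ne_zero_of_mem_unit_sphere ⟨p.1, hp.1⟩)
  refine (hnear.union hfar).mono fun p (hp : ‖p.1‖ = 1) => ?_
  by_cases hc : |p.2| ≤ R + 1
  · exact Or.inl ⟨mem_sphere_zero_iff_norm.mpr hp, abs_le.mp hc⟩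
  · exact Or.inr ⟨hp.le, not_le.mp hc⟩

end ThickHyperplanesSmallOn

lemma measureReal_slab_le {k : ℕ} (Q : Measure (Vec k)) [IsFiniteMeasure Q] (a μ : Vec k)
    (r : ℝ) {δ : ℝ} (hδ : 0 < δ) :
    Q.real (slab a μ r) ≤ Q.real (thickHyperplane a ⟪a, μ⟫ δ) +
      (∫ x in slab a μ r, ⟪a, x - μ⟫ ^ 2 ∂Q) / δ ^ 2 := by
  set f : Vec k → ℝ := fun x => ⟪a, x - μ⟫ ^ 2
  have hf : Continuous f := by fun_prop
  have hS : MeasurableSet (slab a μ r) := (isClosed_le hf continuous_const).measurableSet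
  have hfS : IntegrableOn f (slab a μ r) Q :=
    Measure.integrableOn_of_bounded (M := r ^ 2) (measure_ne_top _ _) hf.aestronglyMeasurable
      ((ae_restrict_iff' hS).mpr (.of_forall fun x hx => by
        rwa [Real.norm_of_nonneg (sq_nonneg _)]))
  have hmarkov := mul_meas_ge_le_integral_of_nonneg (.of_forall fun x => sq_nonneg _) hfS (δ ^ 2)
  rw [measureReal_restrict_apply (measurableSet_le measurable_const hf.measurable)] at hmarkov
  have hcover : slab a μ r ⊆ thickHyperplane a ⟪a, μ⟫ δ ∪ {x | δ ^ 2 ≤ f x} ∩ slab a μ r := by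
    intro x hx
    by_cases hxδ : |⟪a, x - μ⟫| ≤ δ
    · left
      rwa [thickHyperplane, mem_ofPred_eq, ← inner_sub_right]
    · right
      refine ⟨?_, hx⟩
      show δ ^ 2 ≤ ⟪a, x - μ⟫ ^ 2
      rw [← sq_abs ⟪a, x - μ⟫]
      exact pow_le_pow_left₀ hδ.le (not_le.mp hxδ).le 2
  calc Q.real (slab a μ r)
      ≤ Q.real (thickHyperplane a ⟪a, μ⟫ δ) + Q.real ({x | δ ^ 2 ≤ f x} ∩ slab a μ r) :=
        (measureReal_mono hcover).trans (measureReal_union_le _ _)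
    _ ≤ _ := by gcongr; rwa [le_div_iff₀ (by positivity), mul_comm]

theorem slab_mass_lemma_general {k : ℕ} (γ : ℝ) (hγ0 : 0 < γ)
    (P₀ : Measure (Vec k)) [IsProbabilityMeasure P₀]
    (P : ℕ → Measure (Vec k)) [∀ n, IsProbabilityMeasure (P n)]
    (hP₀ : HypSmall P₀ γ) (hconv : WeakLim P P₀) :
    ∃ ε > (0 : ℝ), ∃ n₀ : ℕ, 1 ≤ n₀ ∧
      ∀ Q : Measure (Vec k), (Q = P₀ ∨ ∃ n, n₀ ≤ n ∧ Q = P n) →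
        ∀ a : Vec k, ‖a‖ = 1 → ∀ μ : Vec k, ∀ r : ℝ, 0 < r →
          γ - ε ≤ (Q (slab a μ r)).toReal →
            ε ≤ ∫ x in slab a μ r, (inner ℝ a (x - μ) : ℝ) ^ 2 ∂Q := by
  obtain ⟨δ, hδ, β, hβ, hev⟩ := thickHyperplanesSmallOn_unit_sphere hγ0 hP₀ hconv
  obtain ⟨n₀, hn₀⟩ := eventually_atTop.mp hev
  refine ⟨β * δ ^ 2 / (δ ^ 2 + 1), by positivity, max n₀ 1, le_max_right _ _, ?_⟩
  intro Q hQ a ha μ r _ hmass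
  have : IsFiniteMeasure Q := by rcases hQ with rfl | ⟨n, -, rfl⟩ <;> infer_instance
  have hthick : Q.real (thickHyperplane a ⟪a, μ⟫ δ) ≤ γ - β := by
    rcases hQ with rfl | ⟨n, hn, rfl⟩
    · exact (hn₀ n₀ le_rfl (a, _) ha).1
    · exact (hn₀ n (le_of_max_le_left hn) (a, _) ha).2
  rw [← measureReal_def] at hmass
  by_contra! hsmall
  have hβ_eq : β * δ ^ 2 / (δ ^ 2 + 1) + β * δ ^ 2 / (δ ^ 2 + 1) / δ ^ 2 = β := by
    field_simp
  have := div_lt_div_of_pos_right hsmall (by positivity : (0 : ℝ) < δ ^ 2)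
  linarith [measureReal_slab_le Q a μ r hδ]

theorem slab_mass_lemma {k : ℕ} (hk : 1 ≤ k) (γ : ℝ) (hγ0 : 0 < γ) (hγ1 : γ ≤ 1)
    (P₀ : Measure (Vec k)) [IsProbabilityMeasure P₀]
    (P : ℕ → Measure (Vec k)) [∀ n, IsProbabilityMeasure (P n)]
    (hP₀ : HypSmall P₀ γ) (hconv : WeakLim P P₀) :
    ∃ ε > (0 : ℝ), ∃ n₀ : ℕ, 1 ≤ n₀ ∧
      ∀ Q : Measure (Vec k), (Q = P₀ ∨ ∃ n, n₀ ≤ n ∧ Q = P n) →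
        ∀ a : Vec k, ‖a‖ = 1 → ∀ μ : Vec k, ∀ r : ℝ, 0 < r →
          γ - ε ≤ (Q (slab a μ r)).toReal →
            ε ≤ ∫ x in slab a μ r, (inner ℝ a (x - μ) : ℝ) ^ 2 ∂Q :=
  slab_mass_lemma_general γ hγ0 P₀ P hP₀ hconv

end
end

section
/- Let Σ₁ and Σ₂ be symmetric k×k real matrices, with Σ₁ positive semidefinite and Σ₂ positive definite. If Tr(Σ₂⁻¹(Σ₁ − Σ₂)) < 0 then det Σ₁ < det Σ₂; similarly, if Tr(Σ₂⁻¹(Σ₁ − Σ₂)) ≤ 0 then det Σ₁ ≤ det Σ₂. -/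
/-!
Write `Σ₂ = Cᴴ C` with `C` invertible and put `M = C⁻ᴴ Σ₁ C⁻¹`, a positive semidefinite matrix
with `det M = det Σ₁ / det Σ₂` and `Tr M - k = Tr(Σ₂⁻¹(Σ₁ - Σ₂))`. Applying `λ ≤ exp (λ - 1)`
to each (nonnegative) eigenvalue of `M` gives `det M ≤ exp (Tr M - k)`, hence
`det Σ₁ ≤ det Σ₂ · exp (Tr(Σ₂⁻¹(Σ₁ - Σ₂)))`, and both claims follow.
-/

open scoped MatrixOrder

namespace Matrix

variable {n : Type*} [Fintype n] [DecidableEq n]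

theorem PosSemidef.det_le_exp_trace_sub_card {A : Matrix n n ℝ} (hA : A.PosSemidef) :
    A.det ≤ Real.exp (A.trace - Fintype.card n) := by
  have htrace : A.trace = ∑ i, hA.1.eigenvalues i := by
    simpa using hA.1.trace_eq_sum_eigenvalues
  calc A.det = ∏ i, hA.1.eigenvalues i := by simpa using hA.1.det_eq_prod_eigenvalues
    _ ≤ ∏ i, Real.exp (hA.1.eigenvalues i - 1) :=
      Finset.prod_le_prod (fun i _ ↦ hA.eigenvalues_nonneg i) fun i _ ↦ by
        linarith [Real.add_one_le_exp (hA.1.eigenvalues i - 1)]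
    _ = Real.exp (A.trace - Fintype.card n) := by
      simp [← Real.exp_sum, htrace, Finset.sum_sub_distrib]

theorem PosSemidef.det_le_det_mul_exp_trace {A B : Matrix n n ℝ} (hA : A.PosSemidef)
    (hB : B.PosDef) : A.det ≤ B.det * Real.exp (B⁻¹ * (A - B)).trace := by
  obtain ⟨C, hC, rfl⟩ := CStarAlgebra.isStrictlyPositive_iff_eq_star_mul_self.mp
    hB.isStrictlyPositive
  rw [star_eq_conjTranspose] at hB ⊢
  have hCdet : C.det ≠ 0 := (isUnit_iff_isUnit_det C).mp hC |>.ne_zero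
  set M := C⁻¹ᴴ * A * C⁻¹
  have hM : M.PosSemidef := hA.conjTranspose_mul_mul_same C⁻¹
  have hdet : A.det = (Cᴴ * C).det * M.det := by
    simp only [M, det_mul, det_conjTranspose, det_nonsing_inv, star_trivial, Ring.inverse_eq_inv]
    field_simp
  have htrace : ((Cᴴ * C)⁻¹ * (A - Cᴴ * C)).trace = M.trace - Fintype.card n := by
    rw [mul_sub, nonsing_inv_mul _ (hB.isUnit.map detMonoidHom), trace_sub, trace_one,
      mul_inv_rev, ← conjTranspose_nonsing_inv, ← trace_mul_cycle]
  rw [hdet, htrace]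
  exact mul_le_mul_of_nonneg_left hM.det_le_exp_trace_sub_card hB.det_pos.le

end Matrix

/-- If `Σ₁` is symmetric positive semidefinite, `Σ₂` is symmetric positive definite and
`Tr(Σ₂⁻¹(Σ₁ - Σ₂)) < 0` (resp. `≤ 0`), then `det Σ₁ < det Σ₂` (resp. `≤`). -/
theorem det_lt_of_trace_neg {k : ℕ} (S1 S2 : Matrix (Fin k) (Fin k) ℝ)
    (h1 : S1.PosSemidef) (h2 : S2.PosDef) :
    ((S2⁻¹ * (S1 - S2)).trace < 0 → S1.det < S2.det) ∧
    ((S2⁻¹ * (S1 - S2)).trace ≤ 0 → S1.det ≤ S2.det) := by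
  have hbound := h1.det_le_det_mul_exp_trace h2
  have hdet := h2.det_pos
  refine ⟨fun htr ↦ ?_, fun htr ↦ ?_⟩
  · calc S1.det ≤ S2.det * Real.exp (S2⁻¹ * (S1 - S2)).trace := hbound
      _ < S2.det := mul_lt_of_lt_one_right hdet (Real.exp_lt_one_iff.mpr htr)
  · calc S1.det ≤ S2.det * Real.exp (S2⁻¹ * (S1 - S2)).trace := hbound
      _ ≤ S2.det := mul_le_of_le_one_right hdet.le (Real.exp_le_one_iff.mpr htr)
end

section
/- Let x₁,…,x_n ∈ ℝ^k, 0 < γ ≤ 1, and let S_n be a subsample minimizing det Ĉ_n(S) over all subsamples S of size at least ⌈nγ⌉, such that Ĉ_n(S_n) is positive definite. Let Ê_n = E(T̂_n(S_n), Ĉ_n(S_n), r̂_n(S_n)), where r̂_n(S_n) = inf{ s > 0 : #{i : x_i ∈ E(T̂_n(S_n), Ĉ_n(S_n), s)} ≥ nγ }. Then S_n has exactly ⌈nγ⌉ points, S_n ⊂ Ê_n, and every sample point lying in Ê_n belongs to S_n. -/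
open MeasureTheory Filter Topology
open scoped ENNReal Classical

noncomputable section

def sampleMean {k : ℕ} {ι : Type*} (x : ι → Vec k) (S : Finset ι) : Vec k :=
  (S.card : ℝ)⁻¹ • ∑ i ∈ S, x i

def sampleCov {k : ℕ} {ι : Type*} (x : ι → Vec k) (S : Finset ι) :
    Matrix (Fin k) (Fin k) ℝ :=
  Matrix.of fun a b => (S.card : ℝ)⁻¹ *
    ∑ i ∈ S, (x i a - sampleMean x S a) * (x i b - sampleMean x S b)

/-- `S` is an MCD subsample: it has at least `⌈nγ⌉` points and minimizes the determinant of
the trimmed sample covariance among all subsamples with at least `⌈nγ⌉` points. -/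
def IsMCDSubsample {k n : ℕ} (x : Fin n → Vec k) (γ : ℝ) (S : Finset (Fin n)) : Prop :=
  ⌈(n : ℝ) * γ⌉₊ ≤ S.card ∧
    ∀ S' : Finset (Fin n), ⌈(n : ℝ) * γ⌉₊ ≤ S'.card →
      (sampleCov x S).det ≤ (sampleCov x S').det

/-- `r̂_n(S) = inf { s > 0 : #{i : x_i ∈ E(T̂_n(S), Ĉ_n(S), s)} ≥ nγ }`. -/
def sampleRadius {k n : ℕ} (x : Fin n → Vec k) (γ : ℝ) (S : Finset (Fin n)) : ℝ :=
  sInf {s : ℝ | 0 < s ∧ (n : ℝ) * γ ≤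
    (Finset.univ.filter fun i =>
      x i ∈ ellipsoid (sampleMean x S) (sampleCov x S) s).card}

/-!
Write `d²(y)` for the squared Mahalanobis distance of `y` from a centre `μ` with respect to a
positive definite `A`. For any subsample `T`, Steiner's formula gives
`∑_{i ∈ T} d²(xᵢ) = |T| (tr (A⁻¹ Ĉ(T)) + d²(T̂(T)))`, and AM–GM on the eigenvalues of
`A^{-1/2} Ĉ(T) A^{-1/2}` gives `det Ĉ(T) ≤ det A · (tr (A⁻¹ Ĉ(T)) / k)^k`. Hence if
`∑_{i ∈ T} d²(xᵢ) ≤ |T| k`, then `det Ĉ(T) < det A` unless equality holds and `T̂(T) = μ`.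

Take `A = Ĉ(S)`, `μ = T̂(S)`, for which the distances over `S` sum to exactly `|S| k`. If `S` were
too large, dropping a point at distance at least `k` (the average over `S`) would keep the sum
at most `(|S| - 1) k`, so by minimality that point would have to be the mean, at distance `0`.
Exchanging a point of `S` for an outside point that is no farther keeps the sum at most `|S| k`,
so by minimality the two points coincide. Thus `S` is exactly the set of `⌈nγ⌉` sample points
closest to `T̂(S)`, up to ties between equal points, and `r̂(S)` is the largest distance in `S`.
-/

open Matrix Finset
open scoped MatrixOrder

theorem Real.prod_le_sum_div_card_pow {ι : Type*} (s : Finset ι) {f : ι → ℝ}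
    (hf : ∀ i ∈ s, 0 ≤ f i) : ∏ i ∈ s, f i ≤ ((∑ i ∈ s, f i) / #s) ^ #s := by
  rcases s.eq_empty_or_nonempty with rfl | hs
  · simp
  have amgm := Real.geom_mean_le_arith_mean s (fun _ => 1) f (fun _ _ => zero_le_one)
    (by simpa using hs) hf
  simp only [Real.rpow_one, sum_const, nsmul_eq_mul, mul_one, one_mul] at amgm
  calc ∏ i ∈ s, f i = ((∏ i ∈ s, f i) ^ ((#s : ℝ)⁻¹)) ^ #s :=
        (Real.rpow_inv_natCast_pow (prod_nonneg hf) hs.card_pos.ne').symm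
    _ ≤ ((∑ i ∈ s, f i) / #s) ^ #s :=
        pow_le_pow_left₀ (Real.rpow_nonneg (prod_nonneg hf) _) amgm _

namespace Matrix.PosSemidef

variable {n : Type*} [Fintype n] [DecidableEq n] {D P C : Matrix n n ℝ}

theorem det_le_trace_div_pow (hD : D.PosSemidef) :
    D.det ≤ (D.trace / Fintype.card n) ^ Fintype.card n := by
  rw [hD.1.det_eq_prod_eigenvalues, hD.1.trace_eq_sum_eigenvalues]
  simpa using Real.prod_le_sum_div_card_pow univ fun i _ => hD.eigenvalues_nonneg i

theorem exists_posSemidef_det_eq_trace_eq_mul (hP : P.PosSemidef) (hC : C.PosSemidef) :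
    ∃ D : Matrix n n ℝ, D.PosSemidef ∧ D.det = (P * C).det ∧ D.trace = (P * C).trace := by
  set R := CFC.sqrt P
  have hR : R.PosSemidef := (CFC.sqrt_nonneg P).posSemidef
  have hRR : R * R = P := CFC.sqrt_mul_sqrt_self P hP.nonneg
  refine ⟨R * C * R, by simpa only [hR.1.eq] using hC.conjTranspose_mul_mul_same R, ?_, ?_⟩
  · rw [← hRR]
    simp only [det_mul]
    ring
  · rw [trace_mul_cycle, hRR]

theorem trace_mul_nonneg (hP : P.PosSemidef) (hC : C.PosSemidef) : 0 ≤ (P * C).trace := by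
  obtain ⟨D, hD, -, htr⟩ := exists_posSemidef_det_eq_trace_eq_mul hP hC
  exact htr ▸ hD.trace_nonneg

theorem det_mul_le_trace_mul_div_pow (hP : P.PosSemidef) (hC : C.PosSemidef) :
    (P * C).det ≤ ((P * C).trace / Fintype.card n) ^ Fintype.card n := by
  obtain ⟨D, hD, hdet, htr⟩ := exists_posSemidef_det_eq_trace_eq_mul hP hC
  exact hdet ▸ htr ▸ hD.det_le_trace_div_pow

end Matrix.PosSemidef

section SampleMoments

variable {k : ℕ} {ι : Type*} (x : ι → Vec k) (S : Finset ι)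

theorem card_smul_sampleMean : (#S : ℝ) • sampleMean x S = ∑ i ∈ S, x i := by
  rcases S.eq_empty_or_nonempty with rfl | hS
  · simp
  · exact smul_inv_smul₀ (by positivity) _

theorem sum_sub_sampleMean_apply (a : Fin k) : ∑ i ∈ S, (x i a - sampleMean x S a) = 0 := by
  have h := congr($(card_smul_sampleMean x S) a)
  simp only [PiLp.smul_apply, smul_eq_mul, WithLp.ofLp_sum, Finset.sum_apply] at h
  rw [sum_sub_distrib, sum_const, nsmul_eq_mul, h, sub_self]

theorem sampleCov_empty : sampleCov x ∅ = 0 := by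
  ext a b
  rw [sampleCov, of_apply]
  simp

theorem sum_mul_sampleCov_apply (a b : Fin k) :
    ∑ i ∈ S, (x i a - sampleMean x S a) * (x i b - sampleMean x S b) =
      #S * sampleCov x S a b := by
  rcases S.eq_empty_or_nonempty with rfl | hS
  · simp
  · rw [sampleCov, of_apply, mul_inv_cancel_left₀ (by positivity)]

theorem sampleCov_eq_smul_sum_vecMulVec :
    sampleCov x S = (#S : ℝ)⁻¹ • ∑ i ∈ S,
      vecMulVec (fun a => x i a - sampleMean x S a) (fun a => x i a - sampleMean x S a) := by
  ext a b
  simp [sampleCov, vecMulVec_apply, Matrix.sum_apply]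

theorem sampleCov_posSemidef : (sampleCov x S).PosSemidef := by
  rw [sampleCov_eq_smul_sum_vecMulVec]
  refine (posSemidef_sum S fun i _ => ?_).smul (by positivity)
  simpa using posSemidef_vecMulVec_self_star (fun a => x i a - sampleMean x S a)

theorem nonempty_of_posDef_sampleCov (hk : 1 ≤ k) (hpd : (sampleCov x S).PosDef) :
    S.Nonempty := by
  have : Nonempty (Fin k) := ⟨⟨0, hk⟩⟩
  rw [nonempty_iff_ne_empty]
  rintro rfl
  simpa [sampleCov_empty] using hpd.det_pos

theorem sum_sub_mul_sub_eq (μ : Vec k) (a b : Fin k) :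
    ∑ i ∈ S, (x i a - μ a) * (x i b - μ b) =
      #S * (sampleCov x S a b + (sampleMean x S a - μ a) * (sampleMean x S b - μ b)) := by
  have h i : (x i a - μ a) * (x i b - μ b) =
      (x i a - sampleMean x S a) * (x i b - sampleMean x S b) +
      (sampleMean x S b - μ b) * (x i a - sampleMean x S a) +
      (sampleMean x S a - μ a) * (x i b - sampleMean x S b) +
      (sampleMean x S a - μ a) * (sampleMean x S b - μ b) := by
    ring
  simp only [h, sum_add_distrib, ← mul_sum, sum_sub_sampleMean_apply, sum_mul_sampleCov_apply,
    sum_const, nsmul_eq_mul]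
  ring

end SampleMoments

section Mahalanobis

variable {k : ℕ} {ι : Type*}

def mahalanobisSq (μ : Vec k) (A : Matrix (Fin k) (Fin k) ℝ) (y : Vec k) : ℝ :=
  ∑ a, ∑ b, (y a - μ a) * A⁻¹ a b * (y b - μ b)

variable {μ y : Vec k} {A : Matrix (Fin k) (Fin k) ℝ}

theorem mem_ellipsoid_iff {ρ : ℝ} : y ∈ ellipsoid μ A ρ ↔ mahalanobisSq μ A y ≤ ρ ^ 2 :=
  Iff.rfl

theorem mahalanobisSq_self : mahalanobisSq μ A μ = 0 := by
  simp [mahalanobisSq]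

theorem mahalanobisSq_eq_dotProduct :
    mahalanobisSq μ A y = (fun a => y a - μ a) ⬝ᵥ A⁻¹ *ᵥ fun a => y a - μ a := by
  simp [mahalanobisSq, dotProduct, mulVec, mul_sum, mul_assoc]

theorem mahalanobisSq_nonneg (hA : A.PosDef) (μ y : Vec k) : 0 ≤ mahalanobisSq μ A y := by
  simpa [mahalanobisSq_eq_dotProduct] using hA.inv.posSemidef.dotProduct_mulVec_nonneg _

theorem mahalanobisSq_pos (hA : A.PosDef) (hy : y ≠ μ) : 0 < mahalanobisSq μ A y := by
  refine mahalanobisSq_eq_dotProduct ▸ hA.inv.dotProduct_mulVec_pos fun h => hy ?_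
  ext a
  exact sub_eq_zero.mp (congr_fun h a)

theorem sum_mahalanobisSq_eq (x : ι → Vec k) (T : Finset ι) (μ : Vec k)
    (A : Matrix (Fin k) (Fin k) ℝ) :
    ∑ i ∈ T, mahalanobisSq μ A (x i) =
      #T * ((A⁻¹ * sampleCov x T).trace + mahalanobisSq μ A (sampleMean x T)) := by
  have h a b : ∑ i ∈ T, (x i a - μ a) * A⁻¹ a b * (x i b - μ b) =
      #T * (A⁻¹ a b * sampleCov x T b a +
        (sampleMean x T a - μ a) * A⁻¹ a b * (sampleMean x T b - μ b)) := by
    simp_rw [mul_comm _ (A⁻¹ a b), mul_assoc, ← mul_sum, mul_comm (x _ a - μ a),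
      sum_sub_mul_sub_eq x T μ b a]
    ring
  simp only [mahalanobisSq, trace, Matrix.diag, mul_apply]
  rw [sum_comm]
  simp_rw [sum_comm (s := T), h, ← mul_sum, ← sum_add_distrib]

end Mahalanobis

theorem det_sampleCov_lt_of_sum_mahalanobisSq_le {k : ℕ} {ι : Type*} (hk : 1 ≤ k)
    (x : ι → Vec k) (T : Finset ι) {A : Matrix (Fin k) (Fin k) ℝ} (hA : A.PosDef) (μ : Vec k)
    (hsum : ∑ i ∈ T, mahalanobisSq μ A (x i) ≤ #T * k)
    (hstrict : ∑ i ∈ T, mahalanobisSq μ A (x i) < #T * k ∨ sampleMean x T ≠ μ) :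
    (sampleCov x T).det < A.det := by
  have : Nonempty (Fin k) := ⟨⟨0, hk⟩⟩
  rcases T.eq_empty_or_nonempty with rfl | hT
  · simpa [sampleCov_empty] using hA.det_pos
  set t := (A⁻¹ * sampleCov x T).trace / k
  set δ := mahalanobisSq μ A (sampleMean x T) / k
  have hTk : (0 : ℝ) < #T * k := by positivity
  have hid : ∑ i ∈ T, mahalanobisSq μ A (x i) = #T * k * (t + δ) := by
    rw [sum_mahalanobisSq_eq]
    simp only [t, δ]
    field_simp
  have ht : 0 ≤ t := div_nonneg (hA.inv.posSemidef.trace_mul_nonneg (sampleCov_posSemidef x T))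
    k.cast_nonneg
  have hδ : 0 ≤ δ := div_nonneg (mahalanobisSq_nonneg hA _ _) k.cast_nonneg
  have ht1 : t < 1 := by
    rw [hid] at hsum hstrict
    rcases hstrict with hlt | hne
    · nlinarith
    · have : 0 < δ := div_pos (mahalanobisSq_pos hA hne) (by positivity)
      nlinarith
  have hdet : (A⁻¹ * sampleCov x T).det ≤ t ^ k := by
    simpa using hA.inv.posSemidef.det_mul_le_trace_mul_div_pow (sampleCov_posSemidef x T)
  calc (sampleCov x T).det = A.det * (A⁻¹ * sampleCov x T).det := by
        rw [det_mul, ← mul_assoc, ← det_mul, mul_nonsing_inv _ hA.det_pos.ne'.isUnit, det_one,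
          one_mul]
    _ ≤ A.det * t ^ k := mul_le_mul_of_nonneg_left hdet hA.det_pos.le
    _ < A.det * 1 := mul_lt_mul_of_pos_left (pow_lt_one₀ ht ht1 (by omega)) hA.det_pos
    _ = A.det := mul_one _

theorem sum_mahalanobisSq_sampleMean_sampleCov {k : ℕ} {ι : Type*} (x : ι → Vec k)
    (S : Finset ι) (hpd : (sampleCov x S).PosDef) :
    ∑ i ∈ S, mahalanobisSq (sampleMean x S) (sampleCov x S) (x i) = #S * k := by
  rw [sum_mahalanobisSq_eq, nonsing_inv_mul _ hpd.det_pos.ne'.isUnit, trace_one, mahalanobisSq_self]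
  simp

theorem exists_mem_le_mahalanobisSq_sampleMean {k : ℕ} {ι : Type*} (x : ι → Vec k)
    (S : Finset ι) (hk : 1 ≤ k) (hpd : (sampleCov x S).PosDef) :
    ∃ j ∈ S, (k : ℝ) ≤ mahalanobisSq (sampleMean x S) (sampleCov x S) (x j) :=
  exists_le_of_sum_le (nonempty_of_posDef_sampleCov x S hk hpd) <| by
    rw [sum_mahalanobisSq_sampleMean_sampleCov x S hpd, sum_const, nsmul_eq_mul]

namespace IsMCDSubsample

variable {k n : ℕ} {x : Fin n → Vec k} {γ : ℝ} {S : Finset (Fin n)}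

theorem sum_eq_and_sampleMean_eq_of_sum_le (hS : IsMCDSubsample x γ S) (hk : 1 ≤ k)
    (hpd : (sampleCov x S).PosDef) {T : Finset (Fin n)} (hT : ⌈(n : ℝ) * γ⌉₊ ≤ #T)
    (hsum : ∑ i ∈ T, mahalanobisSq (sampleMean x S) (sampleCov x S) (x i) ≤ #T * k) :
    ∑ i ∈ T, mahalanobisSq (sampleMean x S) (sampleCov x S) (x i) = #T * k ∧
      sampleMean x T = sampleMean x S := by
  by_contra h
  exact (hS.2 T hT).not_gt <| det_sampleCov_lt_of_sum_mahalanobisSq_le hk x T hpd _ hsum <|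
    (not_and_or.mp h).imp hsum.lt_of_ne id

theorem card_eq (hS : IsMCDSubsample x γ S) (hk : 1 ≤ k) (hpd : (sampleCov x S).PosDef) :
    #S = ⌈(n : ℝ) * γ⌉₊ := by
  refine le_antisymm (not_lt.mp fun hlt => ?_) hS.1
  obtain ⟨j, hj, hkj⟩ := exists_mem_le_mahalanobisSq_sampleMean x S hk hpd
  obtain ⟨-, hmean⟩ := hS.sum_eq_and_sampleMean_eq_of_sum_le hk hpd (T := S.erase j)
    (by rw [card_erase_of_mem hj]; omega) (by
      rw [sum_erase_eq_sub hj, sum_mahalanobisSq_sampleMean_sampleCov x S hpd,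
        cast_card_erase_of_mem hj]
      linarith)
  have hxj : x j = sampleMean x S := by
    have h := card_smul_sampleMean x (S.erase j)
    rw [hmean, sum_erase_eq_sub hj, ← card_smul_sampleMean x S, cast_card_erase_of_mem hj] at h
    linear_combination (norm := module) h
  rw [hxj, mahalanobisSq_self] at hkj
  have : (1 : ℝ) ≤ k := by exact_mod_cast hk
  linarith

theorem eq_of_mahalanobisSq_le (hS : IsMCDSubsample x γ S) (hk : 1 ≤ k)
    (hpd : (sampleCov x S).PosDef) {i j : Fin n} (hj : j ∈ S) (hi : i ∉ S)
    (hle : mahalanobisSq (sampleMean x S) (sampleCov x S) (x i) ≤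
      mahalanobisSq (sampleMean x S) (sampleCov x S) (x j)) : x i = x j := by
  have hi' : i ∉ S.erase j := fun h => hi (mem_of_mem_erase h)
  have hcard : #(insert i (S.erase j)) = #S := by
    rw [card_insert_of_notMem hi', card_erase_add_one hj]
  obtain ⟨-, hmean⟩ := hS.sum_eq_and_sampleMean_eq_of_sum_le hk hpd (T := insert i (S.erase j))
    (hcard ▸ hS.1) (by
      rw [sum_insert hi', sum_erase_eq_sub hj, hcard,
        sum_mahalanobisSq_sampleMean_sampleCov x S hpd]
      linarith)
  have h := card_smul_sampleMean x (insert i (S.erase j))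
  rw [hmean, hcard, sum_insert hi', sum_erase_eq_sub hj, ← card_smul_sampleMean x S] at h
  linear_combination (norm := module) -h

theorem filter_mahalanobisSq_le_subset_erase (hS : IsMCDSubsample x γ S) (hk : 1 ≤ k)
    (hpd : (sampleCov x S).PosDef) {j : Fin n} (hj : j ∈ S) {t : ℝ}
    (ht : t < mahalanobisSq (sampleMean x S) (sampleCov x S) (x j)) :
    univ.filter (fun i => mahalanobisSq (sampleMean x S) (sampleCov x S) (x i) ≤ t) ⊆
      S.erase j := by
  intro i hi
  have hlt := (mem_filter.mp hi).2.trans_lt ht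
  refine mem_erase.mpr ⟨?_, ?_⟩
  · rintro rfl
    exact lt_irrefl _ hlt
  · by_contra hiS
    rw [hS.eq_of_mahalanobisSq_le hk hpd hj hiS hlt.le] at hlt
    exact lt_irrefl _ hlt

theorem sampleRadius_eq (hS : IsMCDSubsample x γ S) (hk : 1 ≤ k) (hpd : (sampleCov x S).PosDef)
    {j : Fin n} (hj : j ∈ S)
    (hmax : ∀ i ∈ S, mahalanobisSq (sampleMean x S) (sampleCov x S) (x i) ≤
      mahalanobisSq (sampleMean x S) (sampleCov x S) (x j)) :
    sampleRadius x γ S = √(mahalanobisSq (sampleMean x S) (sampleCov x S) (x j)) := by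
  set q := fun i => mahalanobisSq (sampleMean x S) (sampleCov x S) (x i)
  have hq : 0 < q j := by
    obtain ⟨j', hj', hkj'⟩ := exists_mem_le_mahalanobisSq_sampleMean x S hk hpd
    have : (1 : ℝ) ≤ k := by exact_mod_cast hk
    linarith [hmax j' hj']
  have hr : 0 < √(q j) := Real.sqrt_pos.mpr hq
  have hcard := hS.card_eq hk hpd
  have hpos := (nonempty_of_posDef_sampleCov x S hk hpd).card_pos
  suffices {s : ℝ | 0 < s ∧ (n : ℝ) * γ ≤
      #{i | x i ∈ ellipsoid (sampleMean x S) (sampleCov x S) s}} = Set.Ici √(q j) by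
    rw [sampleRadius, this, csInf_Ici]
  ext s
  simp only [Set.mem_ofPred_eq, Set.mem_Ici, mem_ellipsoid_iff]
  constructor
  · rintro ⟨hs, hcount⟩
    by_contra! hsr
    have hsub := hS.filter_mahalanobisSq_le_subset_erase hk hpd hj (t := s ^ 2)
      ((Real.lt_sqrt hs.le).mp hsr)
    have := (Nat.ceil_le.mpr hcount).trans (card_le_card hsub)
    rw [card_erase_of_mem hj] at this
    omega
  · intro hrs
    refine ⟨hr.trans_le hrs, ?_⟩
    have hsub : S ⊆ univ.filter fun i => q i ≤ s ^ 2 := fun i hi =>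
      mem_filter.mpr
        ⟨mem_univ i, (hmax i hi).trans ((Real.sqrt_le_left (hr.le.trans hrs)).mp hrs)⟩
    calc (n : ℝ) * γ ≤ ⌈(n : ℝ) * γ⌉₊ := Nat.le_ceil _
      _ = #S := by rw [hcard]
      _ ≤ #(univ.filter fun i => q i ≤ s ^ 2) := by exact_mod_cast card_le_card hsub

end IsMCDSubsample

theorem mcd_subsample_separating_ellipsoid_general {k : ℕ} (hk : 1 ≤ k)
    (n : ℕ) (x : Fin n → Vec k)
    (γ : ℝ)
    (S : Finset (Fin n)) (hS : IsMCDSubsample x γ S)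
    (hpd : (sampleCov x S).PosDef) :
    S.card = ⌈(n : ℝ) * γ⌉₊ ∧
    (∀ i ∈ S, x i ∈ ellipsoid (sampleMean x S) (sampleCov x S) (sampleRadius x γ S)) ∧
    (∀ i : Fin n, x i ∈ ellipsoid (sampleMean x S) (sampleCov x S) (sampleRadius x γ S) →
      ∃ j ∈ S, x j = x i) := by
  obtain ⟨j, hj, hmax⟩ := S.exists_max_image
    (fun i => mahalanobisSq (sampleMean x S) (sampleCov x S) (x i))
    (nonempty_of_posDef_sampleCov x S hk hpd)
  have hr := hS.sampleRadius_eq hk hpd hj hmax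
  have hq := mahalanobisSq_nonneg hpd (sampleMean x S) (x j)
  refine ⟨hS.card_eq hk hpd, fun i hi => ?_, fun i hi => ?_⟩
  · rw [mem_ellipsoid_iff, hr, Real.sq_sqrt hq]
    exact hmax i hi
  · rw [mem_ellipsoid_iff, hr, Real.sq_sqrt hq] at hi
    by_cases hiS : i ∈ S
    · exact ⟨i, hiS, rfl⟩
    · exact ⟨j, hj, (hS.eq_of_mahalanobisSq_le hk hpd hj hiS hi).symm⟩

theorem mcd_subsample_separating_ellipsoid {k : ℕ} (hk : 1 ≤ k)
    (n : ℕ) (hn : 1 ≤ n) (x : Fin n → Vec k)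
    (γ : ℝ) (hγ0 : 0 < γ) (hγ1 : γ ≤ 1)
    (S : Finset (Fin n)) (hS : IsMCDSubsample x γ S)
    (hpd : (sampleCov x S).PosDef) :
    S.card = ⌈(n : ℝ) * γ⌉₊ ∧
    (∀ i ∈ S, x i ∈ ellipsoid (sampleMean x S) (sampleCov x S) (sampleRadius x γ S)) ∧
    (∀ i : Fin n, x i ∈ ellipsoid (sampleMean x S) (sampleCov x S) (sampleRadius x γ S) →
      ∃ j ∈ S, x j = x i) :=
  mcd_subsample_separating_ellipsoid_general hk n x γ S hS hpd
end
end

section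
/- Let S_m be a finite subsample of points of ℝ^k of size m ≥ 2 with trimmed sample mean T_m = T̂(S_m) and trimmed sample covariance C_m = Ĉ(S_m), and suppose C_m is positive definite. Let X* ∈ S_m attain the maximum of (X − T_m)ᵀ C_m⁻¹ (X − T_m) over X ∈ S_m, and let S_{m−1} = S_m \ {X*} with trimmed sample covariance C_{m−1} = Ĉ(S_{m−1}). Then det C_{m−1} ≤ det C_m. -/
open MeasureTheory Filter Topology
open scoped ENNReal Classical

noncomputable section

/-- Mahalanobis-type quadratic form `vᵀ C⁻¹ v`. -/
def mahal {k : ℕ} (C : Matrix (Fin k) (Fin k) ℝ) (v : Vec k) : ℝ :=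
  ∑ a, ∑ b, v a * C⁻¹ a b * v b

/-!
Deleting `X*` is a rank-one downdate of the covariance:
`C_{m-1} = (1 + t) (C_m - t d dᵀ)` with `d = X* - T_m` and `t = 1/(m-1)`, so by the matrix
determinant lemma `det C_{m-1} = (1 + t)^k (1 - t q) det C_m`, where `q = dᵀ C_m⁻¹ d`.
The Mahalanobis distances of the points of `S_m` average to `trace (C_m⁻¹ C_m) = k`, so the
farthest point has `q ≥ k`, and `(1 + t)^k (1 - k t) ≤ e^{k t} e^{-k t} = 1`.
-/

open Matrix Finset

lemma one_add_pow_mul_one_sub_le_one {t : ℝ} (ht : 0 ≤ t) (k : ℕ) :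
    (1 + t) ^ k * (1 - k * t) ≤ 1 := by
  rcases le_or_gt 0 (1 - k * t) with h | h
  · calc (1 + t) ^ k * (1 - k * t) ≤ Real.exp t ^ k * Real.exp (-(k * t)) := by
          gcongr
          · linarith [Real.add_one_le_exp t]
          · linarith [Real.add_one_le_exp (-(k * t))]
      _ = 1 := by rw [← Real.exp_nat_mul, ← Real.exp_add, add_neg_cancel, Real.exp_zero]
  · nlinarith [pow_nonneg (by linarith : (0 : ℝ) ≤ 1 + t) k]

theorem Matrix.det_add_vecMulVec {n R : Type*} [Fintype n] [DecidableEq n] [CommRing R]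
    {A : Matrix n n R} (hA : IsUnit A.det) (u v : n → R) :
    (A + vecMulVec u v).det = A.det * (1 + v ⬝ᵥ (A⁻¹ *ᵥ u)) := by
  rw [vecMulVec_eq Unit, det_add_replicateCol_mul_replicateRow hA, Matrix.mul_assoc,
    ← replicateCol_mulVec, det_unique (n := Unit)]
  rfl

lemma mahal_eq_dotProduct {k : ℕ} (C : Matrix (Fin k) (Fin k) ℝ) (v : Vec k) :
    mahal C v = ⇑v ⬝ᵥ (C⁻¹ *ᵥ ⇑v) := by
  simp only [mahal, dotProduct, mulVec, Finset.mul_sum]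
  exact Finset.sum_congr rfl fun a _ => Finset.sum_congr rfl fun b _ => by ring

section Sample

variable {k : ℕ} {ι : Type*} (x : ι → Vec k)

lemma sampleMean_apply (F : Finset ι) (a : Fin k) :
    sampleMean x F a = (#F : ℝ)⁻¹ * ∑ i ∈ F, x i a := by
  simp [sampleMean, WithLp.ofLp_sum]

lemma sum_sub_sampleMean_mul_sub_sampleMean (F : Finset ι) (a b : Fin k) :
    ∑ i ∈ F, (x i a - sampleMean x F a) * (x i b - sampleMean x F b)
      = ∑ i ∈ F, x i a * x i b - #F * (sampleMean x F a * sampleMean x F b) := by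
  rcases F.eq_empty_or_nonempty with rfl | hF
  · simp
  have hF' : (#F : ℝ) ≠ 0 := by exact_mod_cast hF.card_pos.ne'
  simp only [sub_mul, mul_sub, sum_sub_distrib, ← sum_mul, ← mul_sum, sum_const, nsmul_eq_mul,
    sampleMean_apply]
  field_simp
  ring

lemma sampleCov_erase [DecidableEq ι] {S : Finset ι} {j : ι} (hj : j ∈ S) (hS : 2 ≤ #S) :
    sampleCov x (S.erase j) = (1 + (#S - 1 : ℝ)⁻¹) • (sampleCov x S -
      (#S - 1 : ℝ)⁻¹ • vecMulVec ⇑(x j - sampleMean x S) ⇑(x j - sampleMean x S)) := by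
  have hcard : (#(S.erase j) : ℝ) = #S - 1 := by
    rw [card_erase_of_mem hj, Nat.cast_sub (by omega), Nat.cast_one]
  have hm : (#S : ℝ) ≠ 0 := by positivity
  have hm1 : (#S - 1 : ℝ) ≠ 0 := by
    rw [sub_ne_zero]; exact_mod_cast (by omega : #S ≠ 1)
  ext a b
  simp only [sampleCov, Matrix.smul_apply, Matrix.sub_apply, of_apply, vecMulVec_apply,
    smul_eq_mul, PiLp.sub_apply]
  rw [sum_sub_sampleMean_mul_sub_sampleMean, sum_sub_sampleMean_mul_sub_sampleMean]
  simp only [sampleMean_apply, hcard, sum_erase_eq_sub hj]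
  field_simp
  ring

lemma det_sampleCov_erase [DecidableEq ι] {S : Finset ι} {j : ι} (hj : j ∈ S) (hS : 2 ≤ #S)
    (hC : IsUnit (sampleCov x S).det) :
    (sampleCov x (S.erase j)).det = (1 + (#S - 1 : ℝ)⁻¹) ^ k *
      (1 - (#S - 1 : ℝ)⁻¹ * mahal (sampleCov x S) (x j - sampleMean x S)) *
        (sampleCov x S).det := by
  rw [sampleCov_erase x hj hS, det_smul, Fintype.card_fin, sub_eq_add_neg (sampleCov x S),
    ← neg_smul, ← smul_vecMulVec, det_add_vecMulVec hC, mahal_eq_dotProduct, mulVec_smul,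
    dotProduct_smul, smul_eq_mul]
  ring

lemma sum_vecMulVec_sub_sampleMean (S : Finset ι) :
    ∑ i ∈ S, vecMulVec ⇑(x i - sampleMean x S) ⇑(x i - sampleMean x S)
      = (#S : ℝ) • sampleCov x S := by
  rcases S.eq_empty_or_nonempty with rfl | hS
  · simp
  ext a b
  have hS' : (#S : ℝ) ≠ 0 := by exact_mod_cast hS.card_pos.ne'
  simp [sampleCov, Matrix.sum_apply, vecMulVec_apply, hS']

lemma sum_mahal_sampleCov (S : Finset ι) (hC : IsUnit (sampleCov x S).det) :
    ∑ i ∈ S, mahal (sampleCov x S) (x i - sampleMean x S) = #S * k := by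
  have htrace (A : Matrix (Fin k) (Fin k) ℝ) (v : Fin k → ℝ) :
      v ⬝ᵥ (A *ᵥ v) = trace (A * vecMulVec v v) := by
    rw [mul_vecMulVec, trace_vecMulVec, dotProduct_comm]
  simp_rw [mahal_eq_dotProduct, htrace, ← trace_sum, ← Matrix.mul_sum,
    sum_vecMulVec_sub_sampleMean, Matrix.mul_smul, nonsing_inv_mul _ hC, trace_smul, trace_one,
    Fintype.card_fin, smul_eq_mul]

lemma natCast_le_of_forall_mahal_le {S : Finset ι} (hS : S.Nonempty)
    (hC : IsUnit (sampleCov x S).det) {q : ℝ}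
    (hq : ∀ i ∈ S, mahal (sampleCov x S) (x i - sampleMean x S) ≤ q) : (k : ℝ) ≤ q := by
  have hsum := Finset.sum_le_sum hq
  rw [sum_mahal_sampleCov x S hC, Finset.sum_const, nsmul_eq_mul] at hsum
  exact le_of_mul_le_mul_left hsum (by exact_mod_cast hS.card_pos)

end Sample

theorem det_le_of_remove_farthest_general {k : ℕ} {ι : Type*} [DecidableEq ι]
    (x : ι → Vec k) (S : Finset ι) (hcard : 2 ≤ S.card)
    (hpd : (sampleCov x S).PosDef) (j : ι) (hj : j ∈ S)
    (hmax : ∀ i ∈ S, mahal (sampleCov x S) (x i - sampleMean x S)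
      ≤ mahal (sampleCov x S) (x j - sampleMean x S)) :
    (sampleCov x (S.erase j)).det ≤ (sampleCov x S).det := by
  have hC : IsUnit (sampleCov x S).det := hpd.det_pos.ne'.isUnit
  have ht : (0 : ℝ) ≤ (#S - 1 : ℝ)⁻¹ := by
    have : (2 : ℝ) ≤ #S := by exact_mod_cast hcard
    exact inv_nonneg.2 (by linarith)
  have hq := natCast_le_of_forall_mahal_le x ⟨j, hj⟩ hC hmax
  rw [det_sampleCov_erase x hj hcard hC]
  refine (mul_le_mul_of_nonneg_right ?_ hpd.det_pos.le).trans_eq (one_mul _)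
  calc _ ≤ (1 + (#S - 1 : ℝ)⁻¹) ^ k * (1 - k * (#S - 1 : ℝ)⁻¹) :=
        mul_le_mul_of_nonneg_left (by nlinarith) (pow_nonneg (by linarith) k)
    _ ≤ 1 := one_add_pow_mul_one_sub_le_one ht k

theorem det_le_of_remove_farthest {k : ℕ} (hk : 1 ≤ k) {ι : Type*} [DecidableEq ι]
    (x : ι → Vec k) (S : Finset ι) (hcard : 2 ≤ S.card)
    (hpd : (sampleCov x S).PosDef) (j : ι) (hj : j ∈ S)
    (hmax : ∀ i ∈ S, mahal (sampleCov x S) (x i - sampleMean x S)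
      ≤ mahal (sampleCov x S) (x j - sampleMean x S)) :
    (sampleCov x (S.erase j)).det ≤ (sampleCov x S).det :=
  det_le_of_remove_farthest_general x S hcard hpd j hj hmax

end
end
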